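/- Let r, s ≥ 1 and let t, u ≥ 1 satisfy 1/t + 1/u = 1. Then for every A ∈ ℝ^{m×n} and B ∈ ℝ^{n×K}, the L_{r,s} norm satisfies the sub-multiplicative property ‖AB‖_{r,s} ≤ ‖A‖_{1,u} · ‖B‖_{t,s}. -/

import Mathlib

open Real Matrix Finset

/-- The ℓ_r norm of a vector z ∈ ℝ^d: (Σ_i |z_i|^r)^(1/r). -/
noncomputable def lnorm {d : ℕ} (r : ℝ) (z : Fin d → ℝ) : ℝ :=
  (∑ i, |z i| ^ r) ^ (1 / r)

/-- The L_{r,s} matrix norm: the ℓ_s norm of the vector of ℓ_r norms of the columns. -/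
noncomputable def Lnorm {m n : ℕ} (r s : ℝ) (A : Matrix (Fin m) (Fin n) ℝ) : ℝ :=
  (∑ j, (∑ i, |A i j| ^ r) ^ (s / r)) ^ (1 / s)

/-!
Column `j` of `A * B` is `A *ᵥ b_j` with `b_j` the `j`-th column of `B`. Writing `A *ᵥ b_j` as
`∑ k, b_j k • a_k` over the columns `a_k` of `A`, Minkowski's inequality and `‖a_k‖_r ≤ ‖a_k‖_1`
bound its `ℓ_r` norm by `∑ k, |b_j k| ‖a_k‖_1`, which Hölder's inequality bounds by
`‖A‖_{1,u} ‖b_j‖_t`. Taking `ℓ_s` norms over `j` gives the theorem.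
-/

section lnorm

variable {d : ℕ}

lemma lnorm_nonneg (r : ℝ) (z : Fin d → ℝ) : 0 ≤ lnorm r z := by
  unfold lnorm; positivity

lemma lnorm_mono {r : ℝ} (hr : 0 ≤ r) {z w : Fin d → ℝ} (h : ∀ i, |z i| ≤ |w i|) :
    lnorm r z ≤ lnorm r w := by
  unfold lnorm
  exact rpow_le_rpow (by positivity) (sum_le_sum fun i _ => rpow_le_rpow (abs_nonneg _) (h i) hr)
    (by positivity)

lemma lnorm_const_mul {r : ℝ} (hr : r ≠ 0) (c : ℝ) (z : Fin d → ℝ) :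
    lnorm r (fun i => c * z i) = |c| * lnorm r z := by
  simp only [lnorm, abs_mul, mul_rpow (abs_nonneg c) (abs_nonneg _), ← mul_sum]
  rw [mul_rpow (by positivity) (by positivity), ← rpow_mul (abs_nonneg c), mul_one_div_cancel hr,
    rpow_one]

lemma lnorm_zero {r : ℝ} (hr : r ≠ 0) : lnorm r (0 : Fin d → ℝ) = 0 := by
  simp [lnorm, zero_rpow hr, zero_rpow (inv_ne_zero hr)]

lemma lnorm_single {r : ℝ} (hr : r ≠ 0) (i : Fin d) (c : ℝ) : lnorm r (Pi.single i c) = |c| := by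
  have hsum : ∑ j, |Pi.single i c j| ^ r = |c| ^ r :=
    (sum_eq_single i (fun j _ hji => by simp [hji, zero_rpow hr]) (by simp)).trans (by simp)
  rw [lnorm, hsum, one_div, rpow_rpow_inv (abs_nonneg c) hr]

lemma lnorm_add_le {r : ℝ} (hr : 1 ≤ r) (z w : Fin d → ℝ) :
    lnorm r (z + w) ≤ lnorm r z + lnorm r w :=
  Lp_add_le univ z w hr

lemma lnorm_sum_le {ι : Type*} {r : ℝ} (hr : 1 ≤ r) (s : Finset ι) (f : ι → Fin d → ℝ) :
    lnorm r (∑ k ∈ s, f k) ≤ ∑ k ∈ s, lnorm r (f k) :=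
  le_sum_of_subadditive (lnorm r) (lnorm_zero (by positivity)).le (lnorm_add_le hr) s f

lemma lnorm_one (z : Fin d → ℝ) : lnorm 1 z = ∑ i, |z i| := by
  simp [lnorm]

lemma lnorm_le_lnorm_one {r : ℝ} (hr : 1 ≤ r) (z : Fin d → ℝ) : lnorm r z ≤ lnorm 1 z := by
  calc lnorm r z = lnorm r (∑ i, Pi.single i (z i)) := by rw [univ_sum_single]
    _ ≤ ∑ i, lnorm r (Pi.single i (z i)) := lnorm_sum_le hr _ _
    _ = lnorm 1 z := by simp only [lnorm_single (by positivity : r ≠ 0), lnorm_one]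

lemma sum_abs_mul_le_lnorm_mul_lnorm {t u : ℝ} (htu : t.HolderConjugate u) (x y : Fin d → ℝ) :
    ∑ i, |x i| * |y i| ≤ lnorm t x * lnorm u y := by
  unfold lnorm
  simpa only [abs_abs] using inner_le_Lp_mul_Lq univ (fun i => |x i|) (fun i => |y i|) htu

end lnorm

section Lnorm

variable {m n : ℕ}

lemma Lnorm_eq_lnorm_lnorm (r s : ℝ) (A : Matrix (Fin m) (Fin n) ℝ) :
    Lnorm r s A = lnorm s (fun j => lnorm r (fun i => A i j)) := by
  unfold Lnorm
  congr 1
  refine sum_congr rfl fun j _ => ?_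
  rw [abs_of_nonneg (lnorm_nonneg r _), lnorm, ← rpow_mul (by positivity), one_div_mul_eq_div]

lemma Lnorm_nonneg (r s : ℝ) (A : Matrix (Fin m) (Fin n) ℝ) : 0 ≤ Lnorm r s A := by
  unfold Lnorm; positivity

lemma lnorm_mulVec_le {r t u : ℝ} (hr : 1 ≤ r) (htu : t.HolderConjugate u)
    (A : Matrix (Fin m) (Fin n) ℝ) (x : Fin n → ℝ) :
    lnorm r (A *ᵥ x) ≤ Lnorm 1 u A * lnorm t x := by
  have hcols : A *ᵥ x = ∑ k, fun i => x k * A i k := by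
    ext i; simp [mulVec, dotProduct, mul_comm]
  calc lnorm r (A *ᵥ x) ≤ ∑ k, lnorm r (fun i => x k * A i k) := hcols ▸ lnorm_sum_le hr _ _
    _ = ∑ k, |x k| * lnorm r (fun i => A i k) := by
        simp only [lnorm_const_mul (by positivity : r ≠ 0)]
    _ ≤ ∑ k, |x k| * |lnorm 1 (fun i => A i k)| := by
        gcongr with k
        exact (lnorm_le_lnorm_one hr _).trans (le_abs_self _)
    _ ≤ lnorm t x * lnorm u (fun k => lnorm 1 (fun i => A i k)) :=
        sum_abs_mul_le_lnorm_mul_lnorm htu _ _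
    _ = Lnorm 1 u A * lnorm t x := by rw [Lnorm_eq_lnorm_lnorm 1 u, mul_comm]

end Lnorm

/-- Sub-multiplicativity of the L_{r,s} norm:
‖AB‖_{r,s} ≤ ‖A‖_{1,u} · ‖B‖_{t,s} whenever t, u ≥ 1 with 1/t + 1/u = 1. -/
theorem Lnorm_submultiplicative {m n K : ℕ} (r s t u : ℝ)
    (hr : 1 ≤ r) (hs : 1 ≤ s) (ht : 1 ≤ t) (hu : 1 ≤ u) (htu : 1 / t + 1 / u = 1)
    (A : Matrix (Fin m) (Fin n) ℝ) (B : Matrix (Fin n) (Fin K) ℝ) :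
    Lnorm r s (A * B) ≤ Lnorm 1 u A * Lnorm t s B := by
  have hconj : t.HolderConjugate u :=
    ⟨by simpa only [one_div, inv_one] using htu, by linarith, by linarith⟩
  calc Lnorm r s (A * B) = lnorm s (fun j => lnorm r (A *ᵥ fun k => B k j)) :=
        Lnorm_eq_lnorm_lnorm r s _
    _ ≤ lnorm s (fun j => Lnorm 1 u A * lnorm t (fun k => B k j)) :=
        lnorm_mono (by linarith) fun j => by
          rw [abs_of_nonneg (lnorm_nonneg _ _)]
          exact (lnorm_mulVec_le hr hconj A _).trans (le_abs_self _)
    _ = Lnorm 1 u A * Lnorm t s B := by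
        rw [lnorm_const_mul (by linarith), abs_of_nonneg (Lnorm_nonneg 1 u A),
          Lnorm_eq_lnorm_lnorm t s]
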